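/- Under the previous hypotheses (X ⊆ M compact, conv(X) compact, barycenters exist, and some variance-maximizing μ has a unique barycenter), the circumcenter y ∈ conv(X) of X is unique. -/

import Mathlib

/-!
Let `μ` be a variance-maximizing measure on `X` with unique barycenter `y`, write
`F(z) = ∫ d²(p, z) dμ(p)`, `V = F(y)` and `R(w) = sup_{x ∈ X} d(x, w)`.
For `x ∈ X`, moving mass `t` of `μ` to `x` cannot increase the variance: if `z` is a barycenter of
`(1 - t)μ + tδₓ`, then `(1 - t) F(z) + t d²(x, z) ≤ V ≤ F(z)`. Hence `d²(x, z) ≤ V` and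
`(1 - t) F(z) ≤ V`; by compactness of the barycenters these `z` produce, as `t → 0`, a barycenter
`a` of `μ` with `d²(x, a) ≤ V`, and `a = y`. So `R(y) ≤ √V`. Since a mean square is at most a
maximal square, `√F(w) ≤ R(w)` for every `w`, whence `R(y) ≤ √V ≤ √F(w) ≤ R(w)`: `y` is a
circumcenter, and any circumcenter `w` has `F(w) ≤ V`, so it is a barycenter of `μ`, i.e. `w = y`.
-/

open MeasureTheory

/-- The variance of `μ`: the infimum over `y ∈ M` of `∫ d²(x,y) dμ(x)`. -/
noncomputable def varE {M : Type*} [MetricSpace M] [MeasurableSpace M]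
    (μ : Measure M) : ENNReal :=
  ⨅ y : M, ∫⁻ x, ENNReal.ofReal (dist x y ^ 2) ∂μ

open Filter Topology

section Mixture

variable {α : Type*} [MeasurableSpace α] {μ : Measure α} {x : α} {t : ℝ}

noncomputable def mixDirac (μ : Measure α) (x : α) (t : ℝ) : Measure α :=
  ENNReal.ofReal (1 - t) • μ + ENNReal.ofReal t • Measure.dirac x

lemma isProbabilityMeasure_mixDirac [IsProbabilityMeasure μ] (ht₀ : 0 ≤ t) (ht₁ : t ≤ 1) :
    IsProbabilityMeasure (mixDirac μ x t) := by
  constructor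
  simp only [mixDirac, Measure.add_apply, Measure.smul_apply, smul_eq_mul, measure_univ, mul_one]
  rw [← ENNReal.ofReal_add (by linarith) ht₀]
  norm_num

lemma mixDirac_compl_eq_zero {X : Set α} (hX : MeasurableSet X) (hμ : μ Xᶜ = 0) (hx : x ∈ X) :
    mixDirac μ x t Xᶜ = 0 := by
  simp [mixDirac, hμ, Measure.dirac_apply' x hX.compl, hx]

lemma integral_mixDirac [MeasurableSingletonClass α] {f : α → ℝ} (hf : Integrable f μ)
    (ht₀ : 0 ≤ t) (ht₁ : t ≤ 1) :
    ∫ p, f p ∂mixDirac μ x t = (1 - t) * ∫ p, f p ∂μ + t * f x := by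
  rw [mixDirac, integral_add_measure (hf.smul_measure ENNReal.ofReal_ne_top)
    ((integrable_dirac enorm_lt_top).smul_measure ENNReal.ofReal_ne_top),
    integral_smul_measure, integral_smul_measure, integral_dirac,
    ENNReal.toReal_ofReal (by linarith), ENNReal.toReal_ofReal ht₀, smul_eq_mul, smul_eq_mul]

end Mixture

section Metric

variable {M : Type*} [MetricSpace M]

def IsBarycenter [MeasurableSpace M] (μ : Measure M) (y : M) : Prop :=
  ∀ z : M, ∫ x, dist x y ^ 2 ∂μ ≤ ∫ x, dist x z ^ 2 ∂μ

lemma biSup_ofReal_dist_le_ofReal_iff {X : Set M} {w : M} {c : ℝ} (hc : 0 ≤ c) :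
    (⨆ x ∈ X, ENNReal.ofReal (dist x w)) ≤ ENNReal.ofReal c ↔ ∀ x ∈ X, dist x w ≤ c := by
  simp [ENNReal.ofReal_le_ofReal_iff hc]

section Integrals

variable [MeasurableSpace M] {X : Set M} {μ : Measure M}

lemma integral_dist_sq_le_sq [IsProbabilityMeasure μ] (hμ : μ Xᶜ = 0) {z : M} {c : ℝ}
    (hc : ∀ x ∈ X, dist x z ≤ c) : ∫ x, dist x z ^ 2 ∂μ ≤ c ^ 2 := by
  calc ∫ x, dist x z ^ 2 ∂μ ≤ ∫ _, c ^ 2 ∂μ := by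
        refine integral_mono_of_nonneg (ae_of_all _ fun x => by positivity) (integrable_const _) ?_
        filter_upwards [mem_ae_iff.2 hμ] with x hx
        exact pow_le_pow_left₀ dist_nonneg (hc x hx) 2
    _ = c ^ 2 := by simp

lemma ofReal_sqrt_integral_dist_sq_le [IsProbabilityMeasure μ] (hμ : μ Xᶜ = 0) (z : M) :
    ENNReal.ofReal √(∫ x, dist x z ^ 2 ∂μ) ≤ ⨆ x ∈ X, ENNReal.ofReal (dist x z) := by
  refine le_of_forall_ge fun c hc => ?_
  rcases eq_or_ne c ⊤ with rfl | hc_top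
  · exact le_top
  rw [← ENNReal.ofReal_toReal hc_top] at hc ⊢
  refine ENNReal.ofReal_le_ofReal ((Real.sqrt_le_left ENNReal.toReal_nonneg).2 ?_)
  exact integral_dist_sq_le_sq hμ ((biSup_ofReal_dist_le_ofReal_iff ENNReal.toReal_nonneg).1 hc)

section OpensMeasurable

variable [OpensMeasurableSpace M]

lemma integrable_dist_sq (hX : IsCompact X) [IsFiniteMeasure μ] (hμ : μ Xᶜ = 0) (z : M) :
    Integrable (fun x => dist x z ^ 2) μ := by
  have h : IntegrableOn (fun x => dist x z ^ 2) X μ :=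
    ((continuous_id.dist continuous_const).pow 2).continuousOn.integrableOn_compact hX
  rwa [IntegrableOn, Measure.restrict_eq_self_of_ae_mem (mem_ae_iff.2 hμ)] at h

lemma continuous_integral_dist_sq (hX : Bornology.IsBounded X) [IsFiniteMeasure μ]
    (hμ : μ Xᶜ = 0) : Continuous fun z => ∫ x, dist x z ^ 2 ∂μ := by
  refine continuous_iff_continuousAt.2 fun z₀ => ?_
  obtain ⟨r, hr⟩ := hX.subset_closedBall z₀
  refine continuousAt_of_dominated (bound := fun _ => (r + 1) ^ 2)
    (Eventually.of_forall fun z =>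
      (by fun_prop : Continuous fun x => dist x z ^ 2).aestronglyMeasurable)
    ?_ (integrable_const _)
    (ae_of_all _ fun x => (by fun_prop : Continuous fun z => dist x z ^ 2).continuousAt)
  filter_upwards [Metric.ball_mem_nhds z₀ one_pos] with z hz
  filter_upwards [mem_ae_iff.2 hμ] with x hx
  have hxz : dist x z ≤ r + 1 :=
    (dist_triangle x z₀ z).trans <| add_le_add (Metric.mem_closedBall.1 (hr hx))
      (Metric.mem_ball'.1 hz).le
  rw [Real.norm_eq_abs, abs_of_nonneg (by positivity)]
  exact pow_le_pow_left₀ dist_nonneg hxz 2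

lemma varE_eq_of_isBarycenter (hX : IsCompact X) [IsProbabilityMeasure μ] (hμ : μ Xᶜ = 0)
    {y : M} (hy : IsBarycenter μ y) : varE μ = ENNReal.ofReal (∫ x, dist x y ^ 2 ∂μ) := by
  have key (z : M) : ∫⁻ x, ENNReal.ofReal (dist x z ^ 2) ∂μ
      = ENNReal.ofReal (∫ x, dist x z ^ 2 ∂μ) :=
    (ofReal_integral_eq_lintegral_ofReal (integrable_dist_sq hX hμ z)
      (ae_of_all _ fun x => by positivity)).symm
  refine le_antisymm ((iInf_le _ y).trans (key y).le) (le_iInf fun z => ?_)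
  rw [key]
  exact ENNReal.ofReal_le_ofReal (hy z)

lemma variance_bounds_of_isBarycenter_mixDirac (hX : IsCompact X) [IsProbabilityMeasure μ]
    (hμ : μ Xᶜ = 0)
    (hmax : ∀ ν : Measure M, IsProbabilityMeasure ν → ν Xᶜ = 0 → varE ν ≤ varE μ)
    {y : M} (hy : IsBarycenter μ y) {x : M} (hx : x ∈ X) {t : ℝ} (ht₀ : 0 < t) (ht₁ : t ≤ 1)
    {z : M} (hz : IsBarycenter (mixDirac μ x t) z) :
    dist x z ^ 2 ≤ ∫ p, dist p y ^ 2 ∂μ ∧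
      (1 - t) * ∫ p, dist p z ^ 2 ∂μ ≤ ∫ p, dist p y ^ 2 ∂μ := by
  have := isProbabilityMeasure_mixDirac (μ := μ) (x := x) ht₀.le ht₁
  have hν : mixDirac μ x t Xᶜ = 0 := mixDirac_compl_eq_zero hX.isClosed.measurableSet hμ hx
  have hvar : (1 - t) * ∫ p, dist p z ^ 2 ∂μ + t * dist x z ^ 2 ≤ ∫ p, dist p y ^ 2 ∂μ := by
    have h := hmax _ inferInstance hν
    rwa [varE_eq_of_isBarycenter hX hν hz, varE_eq_of_isBarycenter hX hμ hy,
      integral_mixDirac (integrable_dist_sq hX hμ z) ht₀.le ht₁,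
      ENNReal.ofReal_le_ofReal_iff (integral_nonneg fun _ => by positivity)] at h
  have hyz := hy z
  constructor <;> nlinarith

lemma dist_sq_le_variance_of_varE_maximal (hX : IsCompact X) {K : Set M} (hK : IsCompact K)
    (hbary : ∀ ν : Measure M, IsProbabilityMeasure ν → ν Xᶜ = 0 → ∃ z ∈ K, IsBarycenter ν z)
    [IsProbabilityMeasure μ] (hμ : μ Xᶜ = 0)
    (hmax : ∀ ν : Measure M, IsProbabilityMeasure ν → ν Xᶜ = 0 → varE ν ≤ varE μ)
    {y : M} (hy : IsBarycenter μ y) (hy_unique : ∀ a, IsBarycenter μ a → a = y)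
    {x : M} (hx : x ∈ X) : dist x y ^ 2 ≤ ∫ p, dist p y ^ 2 ∂μ := by
  set V := ∫ p, dist p y ^ 2 ∂μ
  set C := K ∩ {z | dist x z ^ 2 ≤ V}
  have hnear (t : ℝ) (ht₀ : 0 < t) (ht₁ : t ≤ 1) :
      ∃ z ∈ C, (1 - t) * ∫ p, dist p z ^ 2 ∂μ ≤ V := by
    obtain ⟨z, hzK, hz⟩ := hbary _ (isProbabilityMeasure_mixDirac ht₀.le ht₁)
      (mixDirac_compl_eq_zero hX.isClosed.measurableSet hμ hx)
    obtain ⟨hxz, hFz⟩ := variance_bounds_of_isBarycenter_mixDirac hX hμ hmax hy hx ht₀ ht₁ hz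
    exact ⟨z, ⟨hzK, hxz⟩, hFz⟩
  have hC : IsCompact C := hK.inter_right (isClosed_le (by fun_prop) continuous_const)
  obtain ⟨a, haC, ha_min⟩ := hC.exists_isMinOn ((hnear 1 one_pos le_rfl).imp fun _ h => h.1)
    (continuous_integral_dist_sq hX.isBounded hμ).continuousOn
  have hFa : ∫ p, dist p a ^ 2 ∂μ ≤ V := by
    have hlim : Tendsto (fun t : ℝ => (1 - t) * ∫ p, dist p a ^ 2 ∂μ) (𝓝[>] 0)
        (𝓝 (∫ p, dist p a ^ 2 ∂μ)) := by
      have h : Continuous fun t : ℝ => (1 - t) * ∫ p, dist p a ^ 2 ∂μ := by fun_prop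
      simpa using (h.tendsto 0).mono_left nhdsWithin_le_nhds
    refine le_of_tendsto hlim ?_
    filter_upwards [Ioo_mem_nhdsGT one_pos] with t ht
    obtain ⟨z, hzC, hFz⟩ := hnear t ht.1 ht.2.le
    exact (mul_le_mul_of_nonneg_left (ha_min hzC) (sub_nonneg.2 ht.2.le)).trans hFz
  rw [← hy_unique a fun z => hFa.trans (hy z)]
  exact haC.2

end OpensMeasurable

end Integrals

end Metric

theorem circumcenter_unique_general {M : Type*}
    [MetricSpace M] [MeasurableSpace M] [BorelSpace M]
    (X : Set M) (hX : IsCompact X)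
    (hconv : IsCompact {y : M | ∃ μ : Measure M, IsProbabilityMeasure μ ∧ μ Xᶜ = 0 ∧
      ∀ z : M, (∫ x, dist x y ^ 2 ∂μ) ≤ ∫ x, dist x z ^ 2 ∂μ})
    (hbary : ∀ μ : Measure M, IsProbabilityMeasure μ → μ Xᶜ = 0 →
      ∃ y : M, ∀ z : M, (∫ x, dist x y ^ 2 ∂μ) ≤ ∫ x, dist x z ^ 2 ∂μ)
    (huniq : ∃ μ : Measure M, IsProbabilityMeasure μ ∧ μ Xᶜ = 0 ∧
      (∀ μ' : Measure M, IsProbabilityMeasure μ' → μ' Xᶜ = 0 → varE μ' ≤ varE μ) ∧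
      (∃! y : M, ∀ z : M, (∫ x, dist x y ^ 2 ∂μ) ≤ ∫ x, dist x z ^ 2 ∂μ)) :
    ∃ y ∈ {y : M | ∃ μ : Measure M, IsProbabilityMeasure μ ∧ μ Xᶜ = 0 ∧
        ∀ z : M, (∫ x, dist x y ^ 2 ∂μ) ≤ ∫ x, dist x z ^ 2 ∂μ},
      ((⨆ x ∈ X, ENNReal.ofReal (dist x y)) =
        ⨅ y' : M, ⨆ x ∈ X, ENNReal.ofReal (dist x y')) ∧
      ∀ w : M, ((⨆ x ∈ X, ENNReal.ofReal (dist x w)) =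
        ⨅ y' : M, ⨆ x ∈ X, ENNReal.ofReal (dist x y')) → w = y := by
  obtain ⟨μ, hμ, hμX, hmax, y, hy, hy_unique⟩ := huniq
  set V := ∫ x, dist x y ^ 2 ∂μ
  have hbaryK (ν : Measure M) (hν : IsProbabilityMeasure ν) (hνX : ν Xᶜ = 0) :
      ∃ z ∈ {y : M | ∃ μ : Measure M, IsProbabilityMeasure μ ∧ μ Xᶜ = 0 ∧ IsBarycenter μ y},
        IsBarycenter ν z :=
    (hbary ν hν hνX).imp fun z hz => ⟨⟨ν, hν, hνX, hz⟩, hz⟩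
  have hRy : (⨆ x ∈ X, ENNReal.ofReal (dist x y)) ≤ ENNReal.ofReal √V :=
    (biSup_ofReal_dist_le_ofReal_iff (Real.sqrt_nonneg _)).2 fun x hx => Real.le_sqrt_of_sq_le
      (dist_sq_le_variance_of_varE_maximal hX hconv hbaryK hμX hmax hy hy_unique hx)
  have hcirc : (⨆ x ∈ X, ENNReal.ofReal (dist x y)) =
      ⨅ y' : M, ⨆ x ∈ X, ENNReal.ofReal (dist x y') :=
    le_antisymm (le_iInf fun w => hRy.trans <| (ENNReal.ofReal_le_ofReal (Real.sqrt_le_sqrt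
      (hy w))).trans (ofReal_sqrt_integral_dist_sq_le hμX w)) (iInf_le _ y)
  refine ⟨y, ⟨μ, hμ, hμX, hy⟩, hcirc, fun w hw => hy_unique w fun z => le_trans ?_ (hy z)⟩
  have h := (ofReal_sqrt_integral_dist_sq_le hμX w).trans ((hw.trans hcirc.symm).le.trans hRy)
  rwa [ENNReal.ofReal_le_ofReal_iff (Real.sqrt_nonneg _),
    Real.sqrt_le_sqrt_iff (integral_nonneg fun _ => by positivity)] at h

/-- If some variance-maximizing measure on `X` has a unique barycenter, then the
circumcenter of `X` is unique, and it lies in the barycentric convex hull of `X`. -/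
theorem circumcenter_unique {M : Type*}
    [MetricSpace M] [CompleteSpace M] [MeasurableSpace M] [BorelSpace M]
    (X : Set M) (hX : IsCompact X) (hXne : X.Nonempty)
    (hconv : IsCompact {y : M | ∃ μ : Measure M, IsProbabilityMeasure μ ∧ μ Xᶜ = 0 ∧
      ∀ z : M, (∫ x, dist x y ^ 2 ∂μ) ≤ ∫ x, dist x z ^ 2 ∂μ})
    (hbary : ∀ μ : Measure M, IsProbabilityMeasure μ → μ Xᶜ = 0 →
      ∃ y : M, ∀ z : M, (∫ x, dist x y ^ 2 ∂μ) ≤ ∫ x, dist x z ^ 2 ∂μ)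
    (huniq : ∃ μ : Measure M, IsProbabilityMeasure μ ∧ μ Xᶜ = 0 ∧
      (∀ μ' : Measure M, IsProbabilityMeasure μ' → μ' Xᶜ = 0 → varE μ' ≤ varE μ) ∧
      (∃! y : M, ∀ z : M, (∫ x, dist x y ^ 2 ∂μ) ≤ ∫ x, dist x z ^ 2 ∂μ)) :
    ∃ y ∈ {y : M | ∃ μ : Measure M, IsProbabilityMeasure μ ∧ μ Xᶜ = 0 ∧
        ∀ z : M, (∫ x, dist x y ^ 2 ∂μ) ≤ ∫ x, dist x z ^ 2 ∂μ},
      ((⨆ x ∈ X, ENNReal.ofReal (dist x y)) =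
        ⨅ y' : M, ⨆ x ∈ X, ENNReal.ofReal (dist x y')) ∧
      ∀ w : M, ((⨆ x ∈ X, ENNReal.ofReal (dist x w)) =
        ⨅ y' : M, ⨆ x ∈ X, ENNReal.ofReal (dist x y')) → w = y :=
  circumcenter_unique_general X hX hconv hbary huniq
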